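/- Let T be a tree on n vertices, n ≥ 3. Then F₂(K_{1,n−1}) ≤ F₂(T) ≤ F₂(P_n), where K_{1,n−1} is the star on n vertices and P_n is the path on n vertices; i.e., among n-vertex trees the star minimizes and the path maximizes the second Zagreb–Fermat eccentricity index. -/
import Mathlib


open SimpleGraph Finset

variable {V : Type*}

/-- The Fermat distance of a vertex triple: minimum over all vertices σ of
    `d(σ,u) + d(σ,v) + d(σ,w)`. -/
noncomputable def fermatDist (G : SimpleGraph V) (u v w : V) : ℕ :=
  ⨅ σ : V, (G.dist σ u + G.dist σ v + G.dist σ w)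

/-- The Fermat eccentricity `ε₃(u;G)`: maximum Fermat distance of triples containing `u`. -/
noncomputable def fermatEcc [Fintype V] (G : SimpleGraph V) (u : V) : ℕ :=
  Finset.univ.sup fun p : V × V => fermatDist G u p.1 p.2

/-- The ordinary eccentricity `ε₂(u;G)`. -/
noncomputable def ecc2 [Fintype V] (G : SimpleGraph V) (u : V) : ℕ :=
  Finset.univ.sup fun v => G.dist u v

/-- The diameter of `G`. -/
noncomputable def gdiam [Fintype V] (G : SimpleGraph V) : ℕ :=
  Finset.univ.sup fun p : V × V => G.dist p.1 p.2

/-- A central vertex: one minimizing the ordinary eccentricity. -/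
def isCentral [Fintype V] (G : SimpleGraph V) (c : V) : Prop :=
  ∀ u : V, ecc2 G c ≤ ecc2 G u

/-- The number of edges of `G`. -/
noncomputable def numEdges [Fintype V] (G : SimpleGraph V) : ℕ :=
  letI := Classical.decEq V
  letI := Classical.decRel G.Adj
  G.edgeFinset.card

/-- The first Zagreb–Fermat eccentricity index `F₁(G) = Σ_u ε₃(u)²`. -/
noncomputable def F1 [Fintype V] (G : SimpleGraph V) : ℕ :=
  ∑ u : V, (fermatEcc G u) ^ 2

/-- The second Zagreb–Fermat eccentricity index `F₂(G) = Σ_{uv ∈ E} ε₃(u)·ε₃(v)`. -/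
noncomputable def F2 [Fintype V] (G : SimpleGraph V) : ℕ :=
  letI := Classical.decEq V
  letI := Classical.decRel G.Adj
  ∑ e ∈ G.edgeFinset,
    Sym2.lift ⟨fun u v => fermatEcc G u * fermatEcc G v, fun _ _ => mul_comm _ _⟩ e

/-- `u` lies in the subtree `T_{v_i}` hanging off the `i`-th vertex of the path `P`:
its geodesic to every vertex of `P` passes through `P.getVert i`. -/
def inSubtree (G : SimpleGraph V) {a b : V} (P : G.Walk a b) (i : ℕ) (u : V) : Prop :=
  ∀ j ≤ P.length, G.dist u (P.getVert j) = G.dist u (P.getVert i) + G.dist (P.getVert i) (P.getVert j)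

/-- `ℓ_i`: the height of the subtree `T_{v_i}`. -/
noncomputable def subtreeHeight [Fintype V] (G : SimpleGraph V) {a b : V} (P : G.Walk a b)
    (i : ℕ) : ℕ :=
  letI := Classical.decPred (inSubtree G P i)
  Finset.univ.sup fun u => if inSubtree G P i u then G.dist (P.getVert i) u else 0


lemma fermatDist_le [Nonempty V] (G : SimpleGraph V) (u v w σ : V) :
    fermatDist G u v w ≤ G.dist σ u + G.dist σ v + G.dist σ w :=
  ciInf_le (OrderBot.bddBelow _) σ

lemma le_fermatDist [Nonempty V] (G : SimpleGraph V) (u v w : V) (m : ℕ)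
    (h : ∀ σ, m ≤ G.dist σ u + G.dist σ v + G.dist σ w) :
    m ≤ fermatDist G u v w :=
  le_ciInf h

lemma exists_fermatDist [Nonempty V] (G : SimpleGraph V) (u v w : V) :
    ∃ σ, G.dist σ u + G.dist σ v + G.dist σ w = fermatDist G u v w := by
  have h := Nat.sInf_mem (Set.range_nonempty
    (fun σ : V => G.dist σ u + G.dist σ v + G.dist σ w))
  exact h

open Classical in
lemma lemA [Fintype V] (G : SimpleGraph V) (hG : G.Connected) :
    ∀ {w u : V} (q : G.Walk w u), q.IsPath → ∀ S : Finset V, u ∈ S →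
    ∃ σ ∈ S, G.dist w σ + S.card ≤ (S ∪ q.support.toFinset).card := by
  intro w u q
  induction q with
  | nil =>
    intro _ S hu
    refine ⟨_, hu, ?_⟩
    simp only [SimpleGraph.dist_self, Nat.zero_add]
    exact Finset.card_le_card Finset.subset_union_left
  | @cons a b c h q ih =>
    intro hp S hu
    by_cases ha : a ∈ S
    · refine ⟨a, ha, ?_⟩
      simp only [SimpleGraph.dist_self, Nat.zero_add]
      exact Finset.card_le_card Finset.subset_union_left
    · rw [SimpleGraph.Walk.cons_isPath_iff] at hp
      obtain ⟨σ, hσS, hσ⟩ := ih hp.1 S hu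
      refine ⟨σ, hσS, ?_⟩
      have h1 : G.dist a σ ≤ 1 + G.dist b σ := by
        calc G.dist a σ ≤ G.dist a b + G.dist b σ := hG.dist_triangle
        _ ≤ 1 + G.dist b σ := by
            have : G.dist a b ≤ 1 := by
              simpa using SimpleGraph.dist_le (SimpleGraph.Walk.cons h SimpleGraph.Walk.nil)
            omega
      have hnot : a ∉ S ∪ q.support.toFinset := by
        simp only [Finset.mem_union, List.mem_toFinset]
        push_neg
        exact ⟨ha, hp.2⟩
      rw [SimpleGraph.Walk.support_cons, List.toFinset_cons, Finset.union_insert,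
        Finset.card_insert_of_notMem hnot]
      omega

lemma fermatDist_le_card [Fintype V] (G : SimpleGraph V) (hG : G.Connected) (u v w : V) :
    fermatDist G u v w ≤ Fintype.card V - 1 := by
  classical
  have : Nonempty V := hG.nonempty
  obtain ⟨p, hp, hplen⟩ := hG.exists_path_of_dist u v
  obtain ⟨q, hq, hqlen⟩ := hG.exists_path_of_dist w u
  have hu : u ∈ p.support.toFinset := by simp
  obtain ⟨σ, hσS, hσ⟩ := lemA G hG q hq p.support.toFinset hu
  have hcard : (p.support.toFinset ∪ q.support.toFinset).card ≤ Fintype.card V :=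
    Finset.card_le_univ _
  have hScard : p.support.toFinset.card = p.length + 1 := by
    rw [List.toFinset_card_of_nodup hp.support_nodup, SimpleGraph.Walk.length_support]
  -- σ on p: dist u σ + dist σ v ≤ p.length
  have hσp : σ ∈ p.support := by simpa using hσS
  have hsplit : G.dist u σ + G.dist σ v ≤ p.length := by
    have h1 : G.dist u σ ≤ (p.takeUntil σ hσp).length := SimpleGraph.dist_le _
    have h2 : G.dist σ v ≤ (p.dropUntil σ hσp).length := SimpleGraph.dist_le _
    have h3 := congrArg SimpleGraph.Walk.length (p.take_spec hσp)
    rw [SimpleGraph.Walk.length_append] at h3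
    omega
  have hfin : fermatDist G u v w ≤ G.dist σ u + G.dist σ v + G.dist σ w :=
    fermatDist_le G u v w σ
  have hc1 : G.dist σ u = G.dist u σ := SimpleGraph.dist_comm
  have hc2 : G.dist σ w = G.dist w σ := SimpleGraph.dist_comm
  omega


lemma fermatEcc_le [Fintype V] (G : SimpleGraph V) (u : V) (m : ℕ)
    (h : ∀ a b, fermatDist G u a b ≤ m) : fermatEcc G u ≤ m :=
  Finset.sup_le fun p _ => h p.1 p.2

lemma le_fermatEcc [Fintype V] (G : SimpleGraph V) (u a b : V) :
    fermatDist G u a b ≤ fermatEcc G u := by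
  have h := Finset.le_sup (f := fun p : V × V => fermatDist G u p.1 p.2) (Finset.mem_univ (a, b))
  exact h

lemma fermatEcc_le_card [Fintype V] (G : SimpleGraph V) (hG : G.Connected) (u : V) :
    fermatEcc G u ≤ Fintype.card V - 1 :=
  fermatEcc_le G u _ fun a b => fermatDist_le_card G hG u a b

lemma dist_le_fermatDist [Fintype V] (G : SimpleGraph V) (hG : G.Connected) (u a b : V) :
    G.dist a b ≤ fermatDist G u a b := by
  have : Nonempty V := hG.nonempty
  refine le_fermatDist G u a b _ fun σ => ?_
  have h1 : G.dist a b ≤ G.dist a σ + G.dist σ b := hG.dist_triangle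
  have h2 : G.dist a σ = G.dist σ a := SimpleGraph.dist_comm
  omega

lemma two_le_fermatDist [Fintype V] (G : SimpleGraph V) (hG : G.Connected)
    {u x y : V} (hux : u ≠ x) (huy : u ≠ y) (hxy : x ≠ y) :
    2 ≤ fermatDist G u x y := by
  have : Nonempty V := hG.nonempty
  refine le_fermatDist G u x y 2 fun σ => ?_
  have hd : ∀ a b : V, a ≠ b → 1 ≤ G.dist a b := fun a b hab => hG.pos_dist_of_ne hab
  by_cases h1 : σ = u
  · subst h1
    have := hd σ x hux
    have := hd σ y huy
    omega
  · by_cases h2 : σ = x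
    · subst h2
      have := hd σ u (h1)
      have := hd σ y hxy
      omega
    · have := hd σ u (h1)
      have := hd σ x (h2)
      omega

lemma mid_of_fermatDist_le_two [Fintype V] (G : SimpleGraph V) (hG : G.Connected)
    {u x y : V} (hux : u ≠ x) (huy : u ≠ y) (hxy : x ≠ y)
    (h : fermatDist G u x y ≤ 2) :
    (G.Adj u x ∧ G.Adj u y) ∨ (G.Adj x u ∧ G.Adj x y) ∨ (G.Adj y u ∧ G.Adj y x) := by
  have : Nonempty V := hG.nonempty
  obtain ⟨σ, hσ⟩ := exists_fermatDist G u x y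
  rw [h.antisymm (two_le_fermatDist G hG hux huy hxy)] at hσ
  have hd : ∀ a b : V, a ≠ b → 1 ≤ G.dist a b := fun a b hab => hG.pos_dist_of_ne hab
  have hadj : ∀ a b : V, G.dist a b = 1 → G.Adj a b := fun a b hab =>
    SimpleGraph.dist_eq_one_iff_adj.mp hab
  by_cases h1 : σ = u
  · subst h1
    have d1 := hd σ x hux
    have d2 := hd σ y huy
    have e0 : G.dist σ σ = 0 := by simp
    exact Or.inl ⟨hadj _ _ (by omega), hadj _ _ (by omega)⟩
  · by_cases h2 : σ = x
    · subst h2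
      have d1 := hd σ u (h1)
      have d2 := hd σ y hxy
      have e0 : G.dist σ σ = 0 := by simp
      exact Or.inr (Or.inl ⟨hadj _ _ (by omega), hadj _ _ (by omega)⟩)
    · by_cases h3 : σ = y
      · subst h3
        have d1 := hd σ u (h1)
        have d2 := hd σ x (h2)
        have e0 : G.dist σ σ = 0 := by simp
        exact Or.inr (Or.inr ⟨hadj _ _ (by omega), hadj _ _ (by omega)⟩)
      · exfalso
        have := hd σ u (h1)
        have := hd σ x (h2)
        have := hd σ y (h3)
        omega

lemma no_triangle {G : SimpleGraph V} (hA : G.IsAcyclic) {a b c : V}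
    (hab : G.Adj a b) (hbc : G.Adj b c) (hac : G.Adj a c) : False := by
  have hP1 : (SimpleGraph.Walk.cons hac SimpleGraph.Walk.nil).IsPath := by
    simp [SimpleGraph.Walk.isPath_def, hac.ne]
  have hP2 : (SimpleGraph.Walk.cons hab (SimpleGraph.Walk.cons hbc SimpleGraph.Walk.nil)).IsPath := by
    simp [SimpleGraph.Walk.isPath_def, hab.ne, hbc.ne, hac.ne]
  have := SimpleGraph.isAcyclic_iff_path_unique.mp hA ⟨_, hP1⟩ ⟨_, hP2⟩
  have hlen := congrArg (fun p : G.Path a c => p.1.length) this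
  simp at hlen

lemma no_square {G : SimpleGraph V} (hA : G.IsAcyclic) {a b c d : V}
    (hab : G.Adj a b) (hbc : G.Adj b c) (hcd : G.Adj c d) (hda : G.Adj d a)
    (hac : a ≠ c) (hbd : b ≠ d) : False := by
  have hP1 : (SimpleGraph.Walk.cons hab (SimpleGraph.Walk.cons hbc SimpleGraph.Walk.nil)).IsPath := by
    simp [SimpleGraph.Walk.isPath_def, hab.ne, hbc.ne, hac]
  have hP2 : (SimpleGraph.Walk.cons hda.symm (SimpleGraph.Walk.cons hcd.symm SimpleGraph.Walk.nil)).IsPath := by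
    simp [SimpleGraph.Walk.isPath_def, hda.ne', hcd.ne', hac]
  have := SimpleGraph.isAcyclic_iff_path_unique.mp hA ⟨_, hP1⟩ ⟨_, hP2⟩
  have hsup := congrArg (fun p : G.Path a c => p.1.support) this
  simp [SimpleGraph.Walk.support_cons] at hsup
  exact hbd hsup

lemma three_le_fermatEcc_of_adj [Fintype V] (T : SimpleGraph V) (hT : T.IsTree)
    (hcard : 4 ≤ Fintype.card V) {u v : V} (huv : T.Adj u v) :
    3 ≤ fermatEcc T u ∨ 3 ≤ fermatEcc T v := by
  classical
  have hG : T.Connected := hT.isConnected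
  have hA : T.IsAcyclic := hT.IsAcyclic
  by_contra hcon
  push_neg at hcon
  obtain ⟨hEu, hEv⟩ := hcon
  have hEu2 : fermatEcc T u ≤ 2 := by omega
  have hEv2 : fermatEcc T v ≤ 2 := by omega
  -- find x y distinct, not in {u, v}
  have hcard2 : 1 < (Finset.univ \ {u, v} : Finset V).card := by
    have h1 : ({u, v} : Finset V).card ≤ 2 := Finset.card_insert_le _ _ |>.trans (by simp)
    have h2 : (Finset.univ \ {u, v} : Finset V).card
        = Fintype.card V - ({u, v} : Finset V).card := by
      rw [Finset.card_sdiff_of_subset (Finset.subset_univ _), Finset.card_univ]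
    omega
  obtain ⟨x, hx, y, hy, hxy⟩ := Finset.one_lt_card.mp hcard2
  simp only [Finset.mem_sdiff, Finset.mem_insert, Finset.mem_singleton] at hx hy
  push_neg at hx hy
  obtain ⟨-, hxu, hxv⟩ := hx
  obtain ⟨-, hyu, hyv⟩ := hy
  have hux : u ≠ x := Ne.symm hxu
  have huy : u ≠ y := Ne.symm hyu
  have hvx : v ≠ x := Ne.symm hxv
  have hvy : v ≠ y := Ne.symm hyv
  have hmu := mid_of_fermatDist_le_two T hG hux huy hxy
    (le_trans (le_fermatEcc T u x y) hEu2)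
  have hmv := mid_of_fermatDist_le_two T hG hvx hvy hxy
    (le_trans (le_fermatEcc T v x y) hEv2)
  rcases hmu with ⟨hux1, huy1⟩ | ⟨hxu1, hxy1⟩ | ⟨hyu1, hyx1⟩ <;>
    rcases hmv with ⟨hvx1, hvy1⟩ | ⟨hxv1, hxy2⟩ | ⟨hyv1, hyx2⟩
  · exact no_square hA hux1 hvx1.symm hvy1 huy1.symm huv.ne hxy
  · exact no_triangle hA hux1 hxy2 huy1
  · exact no_triangle hA hux1 hyx2.symm huy1
  · exact no_triangle hA hvx1 hxy1 hvy1
  · exact no_triangle hA huv hxv1.symm hxu1.symm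
  · exact no_square hA hxu1.symm hxy1 hyv1 huv.symm huy (Ne.symm hvx)
  · exact no_triangle hA hvx1 hyx1.symm hvy1
  · exact no_square hA hyu1.symm hyx1 hxv1 huv.symm hux (Ne.symm hvy)
  · exact no_triangle hA huv hyv1.symm hyu1.symm

lemma two_le_fermatEcc [Fintype V] (G : SimpleGraph V) (hG : G.Connected)
    (hcard : 3 ≤ Fintype.card V) (u : V) : 2 ≤ fermatEcc G u := by
  classical
  have hcard2 : 1 < (Finset.univ \ {u} : Finset V).card := by
    have h2 : (Finset.univ \ {u} : Finset V).card = Fintype.card V - 1 := by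
      rw [Finset.card_sdiff_of_subset (Finset.subset_univ _), Finset.card_univ, Finset.card_singleton]
    omega
  obtain ⟨x, hx, y, hy, hxy⟩ := Finset.one_lt_card.mp hcard2
  simp only [Finset.mem_sdiff, Finset.mem_singleton] at hx hy
  exact le_trans (two_le_fermatDist G hG (Ne.symm hx.2) (Ne.symm hy.2) hxy)
    (le_fermatEcc G u x y)

lemma pathGraph_walk_bound {n : ℕ} : ∀ {i j : Fin n} (p : (SimpleGraph.pathGraph n).Walk i j),
    (i.1 : ℤ) - j.1 ≤ p.length ∧ (j.1 : ℤ) - i.1 ≤ p.length := by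
  intro i j p
  induction p with
  | nil => simp
  | @cons a b c h p ih =>
    rw [SimpleGraph.pathGraph_adj] at h
    rw [SimpleGraph.Walk.length_cons]
    push_cast
    omega

lemma pathGraph_dist_ends {n : ℕ} (hn : 1 ≤ n) :
    n - 1 ≤ (SimpleGraph.pathGraph n).dist (⟨0, by omega⟩ : Fin n) ⟨n - 1, by omega⟩ := by
  obtain ⟨m, rfl⟩ : ∃ m, n = m + 1 := ⟨n - 1, by omega⟩
  obtain ⟨p, hp⟩ := (SimpleGraph.pathGraph_connected m).exists_walk_length_eq_dist
    (⟨0, by omega⟩ : Fin (m + 1)) ⟨m + 1 - 1, by omega⟩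
  have := (pathGraph_walk_bound p).2
  simp only [hp] at this
  omega

lemma fermatEcc_pathGraph {n : ℕ} (hn : 3 ≤ n) (u : Fin n) :
    fermatEcc (SimpleGraph.pathGraph n) u = n - 1 := by
  obtain ⟨m, rfl⟩ : ∃ m, n = m + 1 := ⟨n - 1, by omega⟩
  have hconn := SimpleGraph.pathGraph_connected m
  apply le_antisymm
  · have := fermatEcc_le_card _ hconn u
    simpa using this
  · calc (m + 1) - 1 ≤ (SimpleGraph.pathGraph (m+1)).dist ⟨0, by omega⟩ ⟨m + 1 - 1, by omega⟩ :=
        pathGraph_dist_ends (by omega)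
    _ ≤ fermatDist (SimpleGraph.pathGraph (m+1)) u ⟨0, by omega⟩ ⟨m + 1 - 1, by omega⟩ :=
        dist_le_fermatDist _ hconn _ _ _
    _ ≤ _ := le_fermatEcc _ _ _ _

open Classical in
lemma pathGraph_card_edges {n : ℕ} (hn : 1 ≤ n) :
    (SimpleGraph.pathGraph n).edgeFinset.card = n - 1 := by
  classical
  have himg : (SimpleGraph.pathGraph n).edgeFinset =
      Finset.univ.image (fun i : Fin (n - 1) =>
        s((⟨i.1, by omega⟩ : Fin n), (⟨i.1 + 1, by omega⟩ : Fin n))) := by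
    ext e
    induction e with
    | _ a b =>
      simp only [SimpleGraph.mem_edgeFinset, SimpleGraph.mem_edgeSet,
        Finset.mem_image, Finset.mem_univ, true_and, SimpleGraph.pathGraph_adj]
      constructor
      · rintro (h | h)
        · exact ⟨⟨a.1, by omega⟩, by rw [Sym2.eq_iff]; left
                                     exact ⟨Fin.ext rfl, Fin.ext (by simp; omega)⟩⟩
        · exact ⟨⟨b.1, by omega⟩, by rw [Sym2.eq_iff]; right
                                     exact ⟨Fin.ext rfl, Fin.ext (by simp; omega)⟩⟩
      · rintro ⟨i, hi⟩
        rw [Sym2.eq_iff] at hi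
        rcases hi with ⟨h1, h2⟩ | ⟨h1, h2⟩
        · left; rw [← h1, ← h2]
        · right; rw [← h1, ← h2]
  rw [himg, Finset.card_image_of_injective _ ?_, Finset.card_univ, Fintype.card_fin]
  intro i j hij
  rw [Sym2.eq_iff] at hij
  rcases hij with ⟨h1, -⟩ | ⟨h1, h2⟩
  · exact Fin.ext (by simpa using congrArg Fin.val h1)
  · have := congrArg Fin.val h1
    have := congrArg Fin.val h2
    simp at *
    omega

section StarSec

variable {k : ℕ}

local notation "Star" => completeBipartiteGraph (Fin 1) (Fin k)

lemma star_dist_center_le (x : Fin 1 ⊕ Fin k) :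
    (Star).dist (Sum.inl 0) x ≤ 1 := by
  cases x with
  | inl i =>
    have : i = 0 := Subsingleton.elim _ _
    subst this
    simp [SimpleGraph.dist_self]
  | inr j =>
    have hadj : (Star).Adj (Sum.inl 0) (Sum.inr j) := by simp
    have := SimpleGraph.dist_le (SimpleGraph.Walk.cons hadj SimpleGraph.Walk.nil)
    simpa using this

lemma star_dist_le_two (x y : Fin 1 ⊕ Fin k) : (Star).dist x y ≤ 2 := by
  cases x with
  | inl i =>
    have : i = 0 := Subsingleton.elim _ _
    subst this
    exact le_trans (star_dist_center_le y) (by omega)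
  | inr j =>
    cases y with
    | inl i =>
      have : i = 0 := Subsingleton.elim _ _
      subst this
      rw [SimpleGraph.dist_comm]
      exact le_trans (star_dist_center_le _) (by omega)
    | inr j' =>
      by_cases h : j = j'
      · subst h; simp [SimpleGraph.dist_self]
      · have h1 : (Star).Adj (Sum.inr j) (Sum.inl 0) := by simp
        have h2 : (Star).Adj (Sum.inl 0) (Sum.inr j') := by simp
        have := SimpleGraph.dist_le
          (SimpleGraph.Walk.cons h1 (SimpleGraph.Walk.cons h2 SimpleGraph.Walk.nil))
        simpa using this

lemma star_fermatEcc_center_le : fermatEcc (Star) (Sum.inl 0) ≤ 2 := by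
  refine fermatEcc_le _ _ 2 fun a b => ?_
  have := fermatDist_le (Star) (Sum.inl 0) a b (Sum.inl 0)
  have h0 : (Star).dist (Sum.inl 0) (Sum.inl (0 : Fin 1)) = 0 := by simp
  have ha := star_dist_center_le (k := k) a
  have hb := star_dist_center_le (k := k) b
  omega

lemma star_fermatEcc_le_three (u : Fin 1 ⊕ Fin k) : fermatEcc (Star) u ≤ 3 := by
  refine fermatEcc_le _ _ 3 fun a b => ?_
  have := fermatDist_le (Star) u a b (Sum.inl 0)
  have hu := star_dist_center_le (k := k) u
  have ha := star_dist_center_le (k := k) a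
  have hb := star_dist_center_le (k := k) b
  omega

end StarSec

section StarSec2

local notation "Star2" => completeBipartiteGraph (Fin 1) (Fin 2)

lemma star_fermatEcc_le_two_of_k2 (u : Fin 1 ⊕ Fin 2) :
    fermatEcc (Star2) u ≤ 2 := by
  refine fermatEcc_le _ _ 2 fun a b => ?_
  by_cases hab : a = b
  · subst hab
    have hF := fermatDist_le (Star2) u a a a
    have hD := star_dist_le_two (k := 2) a u
    simp only [SimpleGraph.dist_self] at hF hD ⊢
    have hd : (Star2).dist a u = (Star2).dist u a := SimpleGraph.dist_comm
    omega
  · by_cases hua : u = a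
    · subst hua
      have hF := fermatDist_le (Star2) u u b u
      have hD := star_dist_le_two (k := 2) u b
      simp only [SimpleGraph.dist_self] at hF hD ⊢
      omega
    · by_cases hub : u = b
      · subst hub
        have hF := fermatDist_le (Star2) u a u u
        have hD := star_dist_le_two (k := 2) u a
        simp only [SimpleGraph.dist_self] at hF hD ⊢
        omega
      · -- u, a, b pairwise distinct; one of them is the center
        have hc : u = Sum.inl 0 ∨ a = Sum.inl 0 ∨ b = Sum.inl 0 := by
          rcases u with i | ju
          · left; congr; exact Subsingleton.elim _ _
          rcases a with i | ja
          · right; left; congr; exact Subsingleton.elim _ _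
          rcases b with i | jb
          · right; right; congr; exact Subsingleton.elim _ _
          exfalso
          have h1 : ju ≠ ja := fun h => hua (by rw [h])
          have h2 : ju ≠ jb := fun h => hub (by rw [h])
          have h3 : ja ≠ jb := fun h => hab (by rw [h])
          omega
        have hle := fermatDist_le (Star2) u a b (Sum.inl 0)
        have h0 : ((Star2).dist (Sum.inl 0) u) + ((Star2).dist (Sum.inl 0) a)
            + ((Star2).dist (Sum.inl 0) b) ≤ 2 := by
          have hu' := star_dist_center_le (k := 2) u
          have ha' := star_dist_center_le (k := 2) a
          have hb' := star_dist_center_le (k := 2) b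
          rcases hc with rfl | rfl | rfl <;>
            simp only [SimpleGraph.dist_self] at * <;> omega
        omega

end StarSec2

section StarSec3

variable {k : ℕ}

local notation "Star" => completeBipartiteGraph (Fin 1) (Fin k)

lemma star_card_edges [Fintype (Star).edgeSet] :
    (Star).edgeFinset.card = k := by
  classical
  have himg : (Star).edgeFinset =
      Finset.univ.image (fun j : Fin k => s((Sum.inl 0 : Fin 1 ⊕ Fin k), Sum.inr j)) := by
    ext e
    induction e with
    | _ a b =>
      simp only [SimpleGraph.mem_edgeFinset, SimpleGraph.mem_edgeSet,
        Finset.mem_image, Finset.mem_univ, true_and, completeBipartiteGraph_adj]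
      constructor
      · rintro (⟨h1, h2⟩ | ⟨h1, h2⟩)
        · rcases a with i | j
          swap
          · simp at h1
          rcases b with i' | j
          · simp at h2
          exact ⟨j, by rw [Sym2.eq_iff]; left
                       exact ⟨by congr; exact Subsingleton.elim _ _, rfl⟩⟩
        · rcases a with i | j
          · simp at h1
          rcases b with i' | j'
          swap
          · simp at h2
          exact ⟨j, by rw [Sym2.eq_iff]; right
                       exact ⟨by congr; exact Subsingleton.elim _ _, rfl⟩⟩
      · rintro ⟨j, hj⟩
        rw [Sym2.eq_iff] at hj
        rcases hj with ⟨h1, h2⟩ | ⟨h1, h2⟩ <;> rw [← h1, ← h2] <;> simp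
  rw [himg, Finset.card_image_of_injective _ ?_, Finset.card_univ, Fintype.card_fin]
  intro i j hij
  rw [Sym2.eq_iff] at hij
  rcases hij with ⟨-, h2⟩ | ⟨h1, -⟩
  · exact Sum.inr.inj h2
  · exact absurd h1 (by simp)

end StarSec3



lemma F2_le_mul [Fintype V] (G : SimpleGraph V) (m : ℕ)
    (h : ∀ a b, G.Adj a b → fermatEcc G a * fermatEcc G b ≤ m) :
    F2 G ≤ numEdges G * m := by
  letI := Classical.decEq V
  letI := Classical.decRel G.Adj
  unfold F2 numEdges
  refine le_trans (Finset.sum_le_card_nsmul _ _ m ?_) (by rw [smul_eq_mul])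
  intro e he
  induction e with
  | _ a b =>
    rw [SimpleGraph.mem_edgeFinset, SimpleGraph.mem_edgeSet] at he
    simpa using h a b he

lemma mul_le_F2 [Fintype V] (G : SimpleGraph V) (m : ℕ)
    (h : ∀ a b, G.Adj a b → m ≤ fermatEcc G a * fermatEcc G b) :
    numEdges G * m ≤ F2 G := by
  letI := Classical.decEq V
  letI := Classical.decRel G.Adj
  unfold F2 numEdges
  refine le_trans (by rw [smul_eq_mul]) (Finset.card_nsmul_le_sum _ _ m ?_)
  intro e he
  induction e with
  | _ a b =>
    rw [SimpleGraph.mem_edgeFinset, SimpleGraph.mem_edgeSet] at he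
    simpa using h a b he

lemma numEdges_tree [Fintype V] (T : SimpleGraph V) (hT : T.IsTree) :
    numEdges T + 1 = Fintype.card V := by
  letI := Classical.decEq V
  letI := Classical.decRel T.Adj
  unfold numEdges
  exact hT.card_edgeFinset

lemma numEdges_star (k : ℕ) :
    numEdges (completeBipartiteGraph (Fin 1) (Fin k)) = k := by
  letI := Classical.decEq (Fin 1 ⊕ Fin k)
  letI := Classical.decRel (completeBipartiteGraph (Fin 1) (Fin k)).Adj
  unfold numEdges
  exact star_card_edges

lemma numEdges_path (n : ℕ) (hn : 1 ≤ n) :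
    numEdges (SimpleGraph.pathGraph n) = n - 1 := by
  letI := Classical.decEq (Fin n)
  letI := Classical.decRel (SimpleGraph.pathGraph n).Adj
  unfold numEdges
  exact pathGraph_card_edges hn

/-- Among trees on `n ≥ 3` vertices, the star minimizes and the path maximizes the
second Zagreb–Fermat eccentricity index: `F₂(K_{1,n-1}) ≤ F₂(T) ≤ F₂(P_n)`. -/
theorem F2_star_le_F2_le_F2_path [Fintype V] (T : SimpleGraph V) (hT : T.IsTree)
    (n : ℕ) (hcard : Fintype.card V = n) (hn : 3 ≤ n) :
    F2 (completeBipartiteGraph (Fin 1) (Fin (n - 1))) ≤ F2 T ∧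
    F2 T ≤ F2 (SimpleGraph.pathGraph n) := by
  have hconn : T.Connected := hT.isConnected
  constructor
  · obtain h3 | h4 : n = 3 ∨ 4 ≤ n := by omega
    · subst h3
      have hstar : F2 (completeBipartiteGraph (Fin 1) (Fin (3 - 1)))
          ≤ numEdges (completeBipartiteGraph (Fin 1) (Fin (3 - 1))) * 4 := by
        refine F2_le_mul _ 4 fun a b _ => ?_
        have ha := star_fermatEcc_le_two_of_k2 a
        have hb := star_fermatEcc_le_two_of_k2 b
        calc fermatEcc _ a * fermatEcc _ b ≤ 2 * 2 := Nat.mul_le_mul ha hb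
          _ = 4 := rfl
      have hT4 : numEdges T * 4 ≤ F2 T := by
        refine mul_le_F2 _ 4 fun a b _ => ?_
        have h2a := two_le_fermatEcc T hconn (by omega) a
        have h2b := two_le_fermatEcc T hconn (by omega) b
        calc (4 : ℕ) = 2 * 2 := rfl
          _ ≤ _ := Nat.mul_le_mul h2a h2b
      have e1 : numEdges (completeBipartiteGraph (Fin 1) (Fin (3 - 1))) = 2 :=
        numEdges_star 2
      have e2 := numEdges_tree T hT
      omega
    · have hstar : F2 (completeBipartiteGraph (Fin 1) (Fin (n - 1)))
          ≤ numEdges (completeBipartiteGraph (Fin 1) (Fin (n - 1))) * 6 := by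
        refine F2_le_mul _ 6 fun a b hab => ?_
        rcases a with i | j
        · have hi : i = 0 := Subsingleton.elim _ _
          subst hi
          have ha := star_fermatEcc_center_le (k := n - 1)
          have hb := star_fermatEcc_le_three (k := n - 1) b
          calc fermatEcc _ _ * fermatEcc _ b ≤ 2 * 3 := Nat.mul_le_mul ha hb
            _ = 6 := rfl
        · rcases b with i | j'
          · have hi : i = 0 := Subsingleton.elim _ _
            subst hi
            have ha := star_fermatEcc_le_three (k := n - 1) (Sum.inr j)
            have hb := star_fermatEcc_center_le (k := n - 1)
            calc fermatEcc _ _ * fermatEcc _ _ ≤ 3 * 2 := Nat.mul_le_mul ha hb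
              _ = 6 := rfl
          · simp at hab
      have hT6 : numEdges T * 6 ≤ F2 T := by
        refine mul_le_F2 _ 6 fun a b hab => ?_
        have h2a := two_le_fermatEcc T hconn (by omega) a
        have h2b := two_le_fermatEcc T hconn (by omega) b
        rcases three_le_fermatEcc_of_adj T hT (by omega) hab with h3 | h3
        · calc (6 : ℕ) = 3 * 2 := rfl
            _ ≤ _ := Nat.mul_le_mul h3 h2b
        · calc (6 : ℕ) = 2 * 3 := rfl
            _ ≤ _ := Nat.mul_le_mul h2a h3
      have e1 := numEdges_star (n - 1)
      have e2 := numEdges_tree T hT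
      omega
  · have h1 : F2 T ≤ numEdges T * ((n - 1) * (n - 1)) := by
      refine F2_le_mul _ _ fun a b _ => ?_
      have ha := fermatEcc_le_card T hconn a
      have hb := fermatEcc_le_card T hconn b
      rw [hcard] at ha hb
      exact Nat.mul_le_mul ha hb
    have h2 : numEdges (SimpleGraph.pathGraph n) * ((n - 1) * (n - 1))
        ≤ F2 (SimpleGraph.pathGraph n) := by
      refine mul_le_F2 _ _ fun a b _ => ?_
      rw [fermatEcc_pathGraph hn a, fermatEcc_pathGraph hn b]
    have e2 := numEdges_tree T hT
    have e3 := numEdges_path n (by omega)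
    have hTe : numEdges T = n - 1 := by omega
    rw [hTe] at h1
    rw [e3] at h2
    exact le_trans h1 h2
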